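/- In the Artin group A(4,4,2) = ⟨s, t, r | stst = tsts, trtr = rtrt, sr = rs⟩, for every k ≥ 1 and all nonzero integers n_1, …, n_k, the element stsrtr commutes with the element (t^{n_1} s t r)(t^{n_2} s t r) ⋯ (t^{n_k} s t r). In particular, for each such product w, the subgroup ⟨stsrtr, w⟩ of A(4,4,2) is abelian. -/

import Mathlib

/-!
Since `s` and `r` commute, `stsrtr = (str)²`, so it commutes with `str`. It also commutes with `t`:
`t·stsrtr = (tsts)·rtr = (stst)·rtr = sts·(trtr) = sts·(rtrt) = stsrtr·t`.
Hence it commutes with every factor `tⁿ·str`, and so with their product.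
-/

namespace A442

/-- The defining relations of the Artin group
`A(4,4,2) = ⟨s, t, r | stst = tsts, trtr = rtrt, sr = rs⟩`,
with `0, 1, 2` playing the roles of `s, t, r`. -/
def rels : Set (FreeGroup (Fin 3)) :=
  { FreeGroup.of 0 * FreeGroup.of 1 * FreeGroup.of 0 * FreeGroup.of 1 *
      (FreeGroup.of 1 * FreeGroup.of 0 * FreeGroup.of 1 * FreeGroup.of 0)⁻¹,
    FreeGroup.of 1 * FreeGroup.of 2 * FreeGroup.of 1 * FreeGroup.of 2 *
      (FreeGroup.of 2 * FreeGroup.of 1 * FreeGroup.of 2 * FreeGroup.of 1)⁻¹,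
    FreeGroup.of 0 * FreeGroup.of 2 * (FreeGroup.of 2 * FreeGroup.of 0)⁻¹ }

/-- The Artin group `A(4,4,2)`. -/
abbrev Grp := PresentedGroup rels

def s : Grp := PresentedGroup.of 0
def t : Grp := PresentedGroup.of 1
def r : Grp := PresentedGroup.of 2

theorem braid_s_t : s * t * s * t = t * s * t * s :=
  PresentedGroup.mk_eq_mk_of_mul_inv_mem (Set.mem_insert _ _)

theorem braid_t_r : t * r * t * r = r * t * r * t :=
  PresentedGroup.mk_eq_mk_of_mul_inv_mem (Set.mem_insert_of_mem _ (Set.mem_insert _ _))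

theorem commute_s_r : Commute s r :=
  PresentedGroup.mk_eq_mk_of_mul_inv_mem (Set.mem_insert_of_mem _ (Set.mem_insert_of_mem _ rfl))

theorem stsrtr_eq_sq : s * t * s * r * t * r = (s * t * r) ^ 2 := by
  calc s * t * s * r * t * r = s * t * (s * r) * t * r := by group
    _ = s * t * (r * s) * t * r := by rw [commute_s_r.eq]
    _ = (s * t * r) ^ 2 := by rw [sq]; group

theorem commute_stsrtr_str : Commute (s * t * s * r * t * r) (s * t * r) :=
  stsrtr_eq_sq ▸ Commute.pow_self _ 2

theorem commute_stsrtr_t : Commute (s * t * s * r * t * r) t := by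
  calc (s * t * s * r * t * r) * t = s * t * s * (r * t * r * t) := by group
    _ = t * s * t * s * r * t * r := by rw [← braid_t_r, ← braid_s_t]; group
    _ = t * (s * t * s * r * t * r) := by group

end A442

theorem Subgroup.isMulCommutative_closure_pair {G : Type*} [Group G] {a b : G}
    (h : Commute a b) : IsMulCommutative (Subgroup.closure {a, b}) := by
  refine Subgroup.isMulCommutative_closure ?_
  simp only [Set.mem_insert_iff, Set.mem_singleton_iff]
  rintro x (rfl | rfl) y (rfl | rfl)
  exacts [rfl, h, h.symm, rfl]

theorem Commute.list_prod_map_zpow_mul {G ι : Type*} [Group G] {z a b : G}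
    (ha : Commute z a) (hb : Commute z b) (l : List ι) (n : ι → ℤ) :
    Commute z (l.map fun i => a ^ n i * b).prod := by
  refine Commute.list_prod_right _ _ ?_
  simp only [List.mem_map]
  rintro _ ⟨i, -, rfl⟩
  exact (ha.zpow_right _).mul_right hb

open A442 in
theorem A442_stsrtr_commutes (k : ℕ) (n : Fin k → ℤ) :
    Commute (s * t * s * r * t * r)
      (((List.finRange k).map fun p => t ^ n p * s * t * r).prod) ∧
    IsMulCommutative (Subgroup.closure {s * t * s * r * t * r,
      ((List.finRange k).map fun p => t ^ n p * s * t * r).prod}) := by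
  have hc : Commute (s * t * s * r * t * r)
      (((List.finRange k).map fun p => t ^ n p * s * t * r).prod) := by
    simpa only [mul_assoc] using
      commute_stsrtr_t.list_prod_map_zpow_mul commute_stsrtr_str (List.finRange k) n
  exact ⟨hc, Subgroup.isMulCommutative_closure_pair hc⟩
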